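/- Define G(z,k) = e^{−z/2}(1+e^{ikz})(1−(e^z+1)^{−ik}) + e^{z/2}(1+e^{−ikz})(1−(e^{−z}+1)^{−ik}). Then for every z ≥ 0 and every k ∈ ℝ: |G(z,k)| ≤ (4 + 2|k|)·e^{−z/2}. -/

import Mathlib

open MeasureTheory Real Set

/-- `G(z,k) = e^{−z/2}(1+e^{ikz})(1−(e^z+1)^{−ik}) + e^{z/2}(1+e^{−ikz})(1−(e^{−z}+1)^{−ik})`,
where `w^{−ik} = e^{−ik log w}` for `w > 0`. -/
noncomputable def coagG (z k : ℝ) : ℂ :=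
  ((Real.exp (-z / 2) : ℝ) : ℂ) * (1 + Complex.exp (Complex.I * (k : ℂ) * (z : ℂ))) *
      (1 - Complex.exp (-(Complex.I * (k : ℂ)) * ((Real.log (Real.exp z + 1) : ℝ) : ℂ))) +
    ((Real.exp (z / 2) : ℝ) : ℂ) * (1 + Complex.exp (-(Complex.I * (k : ℂ) * (z : ℂ)))) *
      (1 - Complex.exp (-(Complex.I * (k : ℂ)) * ((Real.log (Real.exp (-z) + 1) : ℝ) : ℂ)))

lemma abs_exp_I_mul (θ : ℝ) : ‖(Complex.exp (Complex.I * (θ : ℂ)))‖ = 1 := by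
  rw [Complex.norm_exp]
  simp

lemma abs_one_sub_exp_I_mul_le (θ : ℝ) :
    ‖(1 - Complex.exp (Complex.I * (θ : ℂ)))‖ ≤ |θ| := by
  have h : Complex.exp (Complex.I * (θ : ℂ)) = Complex.cos θ + Complex.sin θ * Complex.I := by
    rw [mul_comm]; exact Complex.exp_mul_I _
  have hsq : (‖(1 - Complex.exp (Complex.I * (θ : ℂ)))‖) ^ 2 ≤ θ ^ 2 := by
    rw [h, Complex.sq_norm]
    have : Complex.normSq (1 - (Complex.cos θ + Complex.sin θ * Complex.I))
        = (1 - Real.cos θ) ^ 2 + (Real.sin θ) ^ 2 := by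
      simp [Complex.normSq_apply, Complex.cos_ofReal_re, Complex.sin_ofReal_re]
      ring
    rw [this]
    have hc := Real.one_sub_sq_div_two_le_cos (x := θ)
    have hs := Real.sin_sq_add_cos_sq θ
    nlinarith
  have h0 : 0 ≤ ‖(1 - Complex.exp (Complex.I * (θ : ℂ)))‖ := norm_nonneg _
  nlinarith [abs_nonneg θ, sq_abs θ]

lemma abs_one_add_exp_I_mul_le (θ : ℝ) :
    ‖(1 + Complex.exp (Complex.I * (θ : ℂ)))‖ ≤ 2 := by
  calc ‖(1 + Complex.exp (Complex.I * (θ : ℂ)))‖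
      ≤ ‖(1:ℂ)‖ + ‖(Complex.exp (Complex.I * (θ : ℂ)))‖ :=
        norm_add_le _ _
    _ = 2 := by rw [abs_exp_I_mul]; simp; norm_num

/-- `|G(z,k)| ≤ (4 + 2|k|) e^{−z/2}` for all `z ≥ 0` and `k ∈ ℝ`. -/
theorem stmt_10 :
    ∀ z k : ℝ, 0 ≤ z →
      ‖coagG z k‖ ≤ (4 + 2 * |k|) * Real.exp (-z / 2) := by
  intro z k hz
  have e1 : Complex.I * (k : ℂ) * (z : ℂ) = Complex.I * ((k * z : ℝ) : ℂ) := by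
    push_cast; ring
  have e2 : -(Complex.I * (k : ℂ)) * ((Real.log (Real.exp z + 1) : ℝ) : ℂ)
      = Complex.I * ((-(k * Real.log (Real.exp z + 1)) : ℝ) : ℂ) := by push_cast; ring
  have e3 : -(Complex.I * (k : ℂ) * (z : ℂ)) = Complex.I * ((-(k * z) : ℝ) : ℂ) := by
    push_cast; ring
  have e4 : -(Complex.I * (k : ℂ)) * ((Real.log (Real.exp (-z) + 1) : ℝ) : ℂ)
      = Complex.I * ((-(k * Real.log (Real.exp (-z) + 1)) : ℝ) : ℂ) := by push_cast; ring
  have hlog : Real.log (Real.exp (-z) + 1) ≤ Real.exp (-z) := by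
    have := Real.log_le_sub_one_of_pos (x := Real.exp (-z) + 1) (by positivity)
    linarith
  have hlog0 : 0 ≤ Real.log (Real.exp (-z) + 1) :=
    Real.log_nonneg (by nlinarith [Real.exp_pos (-z)])
  -- first term bound
  have hA : ‖(((Real.exp (-z / 2) : ℝ) : ℂ) *
      (1 + Complex.exp (Complex.I * (k : ℂ) * (z : ℂ))) *
      (1 - Complex.exp (-(Complex.I * (k : ℂ)) * ((Real.log (Real.exp z + 1) : ℝ) : ℂ))))‖
      ≤ 4 * Real.exp (-z / 2) := by
    rw [norm_mul, norm_mul, e1, e2]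
    have h2 : ‖(1 - Complex.exp (Complex.I *
        ((-(k * Real.log (Real.exp z + 1)) : ℝ) : ℂ)))‖ ≤ 2 := by
      have htri : ‖(1 - Complex.exp (Complex.I *
          ((-(k * Real.log (Real.exp z + 1)) : ℝ) : ℂ)))‖
          ≤ ‖(1:ℂ)‖ + ‖(Complex.exp (Complex.I *
          ((-(k * Real.log (Real.exp z + 1)) : ℝ) : ℂ)))‖ := by
        simpa using norm_sub_le (1:ℂ) (Complex.exp (Complex.I *
          ((-(k * Real.log (Real.exp z + 1)) : ℝ) : ℂ)))
      refine htri.trans ?_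
      rw [abs_exp_I_mul]
      norm_num
    have h1 := abs_one_add_exp_I_mul_le (k * z)
    have hpos : (0:ℝ) ≤ Real.exp (-z/2) := (Real.exp_pos _).le
    have habs : ‖((Real.exp (-z / 2) : ℝ) : ℂ)‖ = Real.exp (-z/2) := by
      rw [Complex.norm_real, Real.norm_of_nonneg hpos]
    rw [habs]
    calc Real.exp (-z/2) * ‖(1 + Complex.exp (Complex.I * ((k * z : ℝ) : ℂ)))‖ *
          ‖(1 - Complex.exp (Complex.I * ((-(k * Real.log (Real.exp z + 1)) : ℝ) : ℂ)))‖
        ≤ Real.exp (-z/2) * 2 * 2 := by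
          have := norm_nonneg (1 + Complex.exp (Complex.I * ((k * z : ℝ) : ℂ)))
          gcongr
      _ = 4 * Real.exp (-z/2) := by ring
  -- second term bound
  have hB : ‖(((Real.exp (z / 2) : ℝ) : ℂ) *
      (1 + Complex.exp (-(Complex.I * (k : ℂ) * (z : ℂ)))) *
      (1 - Complex.exp (-(Complex.I * (k : ℂ)) * ((Real.log (Real.exp (-z) + 1) : ℝ) : ℂ))))‖
      ≤ 2 * |k| * Real.exp (-z / 2) := by
    rw [norm_mul, norm_mul, e3, e4]
    have h1 := abs_one_add_exp_I_mul_le (-(k * z))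
    have h2 := abs_one_sub_exp_I_mul_le (-(k * Real.log (Real.exp (-z) + 1)))
    have h2' : ‖(1 - Complex.exp (Complex.I *
        ((-(k * Real.log (Real.exp (-z) + 1)) : ℝ) : ℂ)))‖ ≤ |k| * Real.exp (-z) := by
      refine h2.trans ?_
      rw [abs_neg, abs_mul, abs_of_nonneg hlog0]
      exact mul_le_mul_of_nonneg_left hlog (abs_nonneg k)
    have hpos : (0:ℝ) ≤ Real.exp (z/2) := (Real.exp_pos _).le
    have habs : ‖((Real.exp (z / 2) : ℝ) : ℂ)‖ = Real.exp (z/2) := by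
      rw [Complex.norm_real, Real.norm_of_nonneg hpos]
    rw [habs]
    have key : Real.exp (z/2) * 2 * (|k| * Real.exp (-z)) = 2 * |k| * Real.exp (-z/2) := by
      have hmul : Real.exp (z/2) * Real.exp (-z) = Real.exp (-z/2) := by
        rw [← Real.exp_add]; ring_nf
      calc Real.exp (z/2) * 2 * (|k| * Real.exp (-z))
          = 2 * |k| * (Real.exp (z/2) * Real.exp (-z)) := by ring
        _ = 2 * |k| * Real.exp (-z/2) := by rw [hmul]
    calc Real.exp (z/2) * ‖(1 + Complex.exp (Complex.I * ((-(k * z) : ℝ) : ℂ)))‖ *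
          ‖(1 - Complex.exp (Complex.I *
            ((-(k * Real.log (Real.exp (-z) + 1)) : ℝ) : ℂ)))‖
        ≤ Real.exp (z/2) * 2 * (|k| * Real.exp (-z)) := by
          have := norm_nonneg (1 + Complex.exp (Complex.I * ((-(k * z) : ℝ) : ℂ)))
          gcongr
      _ = 2 * |k| * Real.exp (-z/2) := key
  calc ‖coagG z k‖ ≤ _ + _ := norm_add_le _ _
    _ ≤ 4 * Real.exp (-z/2) + 2 * |k| * Real.exp (-z/2) := add_le_add hA hB
    _ = (4 + 2 * |k|) * Real.exp (-z / 2) := by ring
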